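/- arXiv:2201.01021 — 3 statements merged into one kernel-verified Lean document; each statement's English description precedes it below -/
import Mathlib

section
/- Let P(x, y) = x₁y₁ + x₂y₂ + 2x₃y₁y₂ + x₃²y₁² for x ∈ ℝ³ and y ∈ ℝ². There does not exist a diffeomorphism κ : ℝ³ → ℝ³, κ = (κ₁, κ₂, κ₃), together with functions C₁, C₂ : ℝ² → ℝ depending only on y = (y₁, y₂), such that for all x̃ ∈ ℝ³ and all y ∈ ℝ²: (∂κ₁/∂x̃₁) + (2y₂ + 4κ₃(x̃)y₁)(∂κ₃/∂x̃₁) = 1, (∂κ₁/∂x̃₂) + (2y₂ + 4κ₃(x̃)y₁)(∂κ₃/∂x̃₂) = 0, (∂κ₁/∂x̃₃) + (2y₂ + 4κ₃(x̃)y₁)(∂κ₃/∂x̃₃) = C₁(y), and the analogous system ∂κ₂/∂x̃₁ + 2y₁ ∂κ₃/∂x̃₁ = 0, ∂κ₂/∂x̃₂ + 2y₁ ∂κ₃/∂x̃₂ = 1, ∂κ₂/∂x̃₃ + 2y₁ ∂κ₃/∂x̃₃ = C₂(y). -/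
/-! Write `g = κ₃`. Comparing the equations at different values of `y` shows that `∂₁g = ∂₂g = 0`,
that `∂₃g` is a constant `c`, and that `4 g c` is constant. Either way `g` is constant (if `c = 0`
all partial derivatives vanish), which is impossible since `κ` is onto. -/

theorem isConst_of_fderiv_apply_single_eq_zero {𝕜 E ι : Type*} [RCLike 𝕜] [NormedAddCommGroup E]
    [NormedSpace 𝕜 E] [Fintype ι] [DecidableEq ι] {f : (ι → 𝕜) → E} (hf : Differentiable 𝕜 f)
    (h : ∀ x i, fderiv 𝕜 f x (Pi.single i 1) = 0) (a b : ι → 𝕜) : f a = f b :=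
  is_const_of_fderiv_eq_zero hf
    (fun x => ContinuousLinearMap.coe_injective <|
      (Pi.basisFun 𝕜 ι).ext fun i => by simpa using h x i) a b

/-- Bourgain's counterexample phase
`P(x,y) = x₁y₁ + x₂y₂ + 2x₃y₁y₂ + x₃²y₁²` admits no diffeomorphism `κ` of `ℝ³`
straightening the Gauss map. -/
theorem stmt_1 :
    ¬ ∃ (κ : (Fin 3 → ℝ) → (Fin 3 → ℝ)) (κinv : (Fin 3 → ℝ) → (Fin 3 → ℝ))
        (C₁ C₂ : (Fin 2 → ℝ) → ℝ),
      ContDiff ℝ (⊤ : ℕ∞) κ ∧ ContDiff ℝ (⊤ : ℕ∞) κinv ∧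
      Function.LeftInverse κinv κ ∧ Function.RightInverse κinv κ ∧
      (∀ (x : Fin 3 → ℝ) (y : Fin 2 → ℝ),
        (fderiv ℝ (fun z => κ z 0) x) (Pi.single 0 1)
            + (2 * y 1 + 4 * κ x 2 * y 0) * (fderiv ℝ (fun z => κ z 2) x) (Pi.single 0 1) = 1 ∧
        (fderiv ℝ (fun z => κ z 0) x) (Pi.single 1 1)
            + (2 * y 1 + 4 * κ x 2 * y 0) * (fderiv ℝ (fun z => κ z 2) x) (Pi.single 1 1) = 0 ∧
        (fderiv ℝ (fun z => κ z 0) x) (Pi.single 2 1)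
            + (2 * y 1 + 4 * κ x 2 * y 0) * (fderiv ℝ (fun z => κ z 2) x) (Pi.single 2 1) = C₁ y ∧
        (fderiv ℝ (fun z => κ z 1) x) (Pi.single 0 1)
            + 2 * y 0 * (fderiv ℝ (fun z => κ z 2) x) (Pi.single 0 1) = 0 ∧
        (fderiv ℝ (fun z => κ z 1) x) (Pi.single 1 1)
            + 2 * y 0 * (fderiv ℝ (fun z => κ z 2) x) (Pi.single 1 1) = 1 ∧
        (fderiv ℝ (fun z => κ z 1) x) (Pi.single 2 1)
            + 2 * y 0 * (fderiv ℝ (fun z => κ z 2) x) (Pi.single 2 1) = C₂ y) := by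
  rintro ⟨κ, κinv, C₁, C₂, hκ, -, -, hκinv, H⟩
  set g : (Fin 3 → ℝ) → ℝ := fun z => κ z 2
  have hg : Differentiable ℝ g := differentiable_pi.mp (hκ.differentiable (by simp)) 2
  have hg₀ : ∀ x, fderiv ℝ g x (Pi.single 0 1) = 0 := fun x => by
    have h₀ := (H x ![0, 0]).2.2.2.1
    have h₁ := (H x ![1, 0]).2.2.2.1
    simp only [Matrix.cons_val_zero] at h₀ h₁
    linarith
  have hg₁ : ∀ x, fderiv ℝ g x (Pi.single 1 1) = 0 := fun x => by
    have h₀ := (H x ![0, 0]).2.2.2.2.1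
    have h₁ := (H x ![1, 0]).2.2.2.2.1
    simp only [Matrix.cons_val_zero] at h₀ h₁
    linarith
  obtain ⟨c, hg₂⟩ : ∃ c, ∀ x, fderiv ℝ g x (Pi.single 2 1) = c :=
    ⟨(C₁ ![0, 1] - C₁ ![0, 0]) / 2, fun x => by
      have h₀ := (H x ![0, 0]).2.2.1
      have h₁ := (H x ![0, 1]).2.2.1
      simp only [Matrix.cons_val_zero, Matrix.cons_val_one] at h₀ h₁
      linarith⟩
  have hgc : ∀ x, 4 * g x * c = C₁ ![1, 0] - C₁ ![0, 0] := fun x => by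
    have h₀ := (H x ![0, 0]).2.2.1
    have h₁ := (H x ![1, 0]).2.2.1
    simp only [Matrix.cons_val_zero, Matrix.cons_val_one, hg₂ x] at h₀ h₁
    linarith
  have hconst : ∀ a b, g a = g b := by
    rcases eq_or_ne c 0 with hc | hc
    · refine isConst_of_fderiv_apply_single_eq_zero hg fun x i => ?_
      fin_cases i <;> simp [hg₀, hg₁, hg₂, hc]
    · exact fun a b => mul_right_cancel₀ hc (by linarith [hgc a, hgc b])
  simpa [g, hκinv 0, hκinv 1] using hconst (κinv 0) (κinv 1)
end

section
/- Suppose G : ℝⁿ → ℂ is an L² function whose Fourier transform Ĝ is supported in a ball B(ξ₀, r) of radius r > 0. Then for any ball B(x₀, ρ) with ρ ≤ r^{-1}, one has ∫_{B(x₀,ρ)} |G(x)|² dx ≤ C(n) (ρ r)ⁿ ∫_{ℝⁿ} |G|² dx, where C(n) depends only on n. -/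
/-!
Since `Ĝ` is supported in `B(ξ₀, r)` it is integrable, so `G = 𝓕⁻ Ĝ` almost everywhere and
Plancherel gives `‖Ĝ‖₂ = ‖G‖₂`. Cauchy–Schwarz on the ball then yields the pointwise bound
`|G(x)|² ≤ (∫ |Ĝ|)² ≤ |B(ξ₀, r)| ‖G‖₂²`, and integrating it over `B(x₀, ρ)` gives
`∫_{B(x₀,ρ)} |G|² ≤ |B(x₀, ρ)| |B(ξ₀, r)| ‖G‖₂² = |B(0,1)|² (ρr)ⁿ ‖G‖₂²`.
-/

open MeasureTheory Metric
open scoped FourierTransform RealInnerProductSpace ContDiff SchwartzMap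

theorem sq_integral_norm_le_measureReal_univ_mul_integral_sq_norm {α E : Type*} [MeasurableSpace α]
    [NormedAddCommGroup E] {μ : Measure α} [IsFiniteMeasure μ] {f : α → E} (hf : MemLp f 2 μ) :
    (∫ x, ‖f x‖ ∂μ) ^ 2 ≤ μ.real Set.univ * ∫ x, ‖f x‖ ^ 2 ∂μ := by
  have hf' : MemLp (fun x ↦ ‖f x‖) (ENNReal.ofReal 2) μ := by simpa using hf.norm
  have hone : MemLp (fun _ ↦ (1 : ℝ)) (ENNReal.ofReal 2) μ := memLp_const 1
  have h := integral_mul_le_Lp_mul_Lq_of_nonneg Real.HolderConjugate.two_two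
    (.of_forall fun x ↦ norm_nonneg (f x)) (.of_forall fun _ ↦ zero_le_one) hf' hone
  simp only [mul_one, one_pow, integral_const, smul_eq_mul, Real.rpow_two,
    ← Real.sqrt_eq_rpow] at h
  calc (∫ x, ‖f x‖ ∂μ) ^ 2
      ≤ (√(∫ x, ‖f x‖ ^ 2 ∂μ) * √(μ.real Set.univ)) ^ 2 := by
        gcongr
    _ = μ.real Set.univ * ∫ x, ‖f x‖ ^ 2 ∂μ := by
        rw [mul_pow, Real.sq_sqrt (integral_nonneg fun x ↦ by positivity),
          Real.sq_sqrt measureReal_nonneg, mul_comm]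

section Fourier

variable {V : Type*} [NormedAddCommGroup V] [InnerProductSpace ℝ V] [MeasurableSpace V]
  [BorelSpace V] [FiniteDimensional ℝ V] {f g : V → ℂ}

theorem MeasureTheory.Integrable.integral_fourier_mul_eq (hf : Integrable f) (hg : Integrable g) :
    ∫ ξ, 𝓕 f ξ * g ξ = ∫ x, f x * 𝓕 g x := by
  have h := VectorFourier.integral_fourierIntegral_smul_eq_flip (L := innerₗ V)
    Real.continuous_fourierChar continuous_inner hf hg
  simp only [smul_eq_mul, flip_innerₗ] at h
  exact h

theorem MeasureTheory.Integrable.integral_fourierInv_mul_eq (hf : Integrable f)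
    (hg : Integrable g) : ∫ ξ, 𝓕⁻ f ξ * g ξ = ∫ x, f x * 𝓕⁻ g x := by
  have h := VectorFourier.integral_fourierIntegral_smul_eq_flip (L := -innerₗ V)
    Real.continuous_fourierChar continuous_inner.neg hf hg
  have hflip : (-innerₗ V).flip = -innerₗ V := by ext; simp [real_inner_comm]
  simp only [smul_eq_mul, hflip] at h
  exact h

theorem MeasureTheory.Integrable.fourierInv_fourier_ae_eq (hf : Integrable f)
    (h'f : Integrable (𝓕 f)) : 𝓕⁻ (𝓕 f) =ᵐ[volume] f := by
  have hcont : Continuous (𝓕⁻ (𝓕 f)) :=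
    VectorFourier.fourierIntegral_continuous Real.continuous_fourierChar continuous_inner.neg h'f
  refine ae_eq_of_integral_contDiff_smul_eq hcont.locallyIntegrable hf.locallyIntegrable
    fun φ hφ hφc ↦ ?_
  set u : 𝓢(V, ℂ) := (hφc.comp_left Complex.ofReal_zero).toSchwartzMap
    (Complex.ofRealCLM.contDiff.comp hφ)
  have hu : ∀ F : V → ℂ, (fun x ↦ φ x • F x) = fun x ↦ F x * u x := fun F ↦
    funext fun x ↦ by rw [Complex.real_smul, mul_comm]; rfl
  have hFinv : Integrable (𝓕⁻ ⇑u) := by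
    rw [← SchwartzMap.fourierInv_coe]
    exact (𝓕⁻ u).integrable
  have hinv : 𝓕 (𝓕⁻ ⇑u) = ⇑u := by
    rw [← SchwartzMap.fourierInv_coe, ← SchwartzMap.fourier_coe,
      FourierTransform.fourier_fourierInv_eq]
  rw [hu, hu, h'f.integral_fourierInv_mul_eq u.integrable, hf.integral_fourier_mul_eq hFinv, hinv]

theorem MeasureTheory.Integrable.integral_sq_norm_fourier (hf : Integrable f)
    (h'f : Integrable (𝓕 f)) : ∫ ξ, ‖𝓕 f ξ‖ ^ 2 = ∫ x, ‖f x‖ ^ 2 := by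
  have h := VectorFourier.integral_sesq_fourierIntegral_eq_neg_flip (innerSL ℂ) (L := innerₗ V)
    Real.continuous_fourierChar continuous_inner hf h'f
  simp only [innerSL_apply_apply, flip_innerₗ] at h
  have key : ∫ ξ, inner ℂ (𝓕 f ξ) (𝓕 f ξ) = ∫ x, inner ℂ (f x) (f x) := by
    refine h.trans (integral_congr_ae ?_)
    filter_upwards [hf.fourierInv_fourier_ae_eq h'f] with x hx
    exact congrArg _ hx
  simp only [inner_self_eq_norm_sq_to_K] at key
  exact_mod_cast key

theorem sq_norm_fourierInv_le_of_support_subset {h : V → ℂ} {s : Set V} (hs : volume s ≠ ⊤)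
    (hsupp : Function.support h ⊆ s) (h2 : MemLp h 2 (volume.restrict s)) (x : V) :
    ‖𝓕⁻ h x‖ ^ 2 ≤ volume.real s * ∫ ξ, ‖h ξ‖ ^ 2 := by
  have : IsFiniteMeasure (volume.restrict s) := isFiniteMeasure_restrict.2 hs
  have hzero : ∀ F : ℂ → ℝ, F 0 = 0 → ∫ ξ in s, F (h ξ) = ∫ ξ, F (h ξ) := fun F hF ↦
    setIntegral_eq_integral_of_forall_compl_eq_zero fun ξ hξ ↦ by
      rw [Function.notMem_support.1 fun h' ↦ hξ (hsupp h'), hF]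
  calc ‖𝓕⁻ h x‖ ^ 2 ≤ (∫ ξ, ‖h ξ‖) ^ 2 := by
        gcongr
        exact VectorFourier.norm_fourierIntegral_le_integral_norm _ _ _ _ _
    _ = (∫ ξ in s, ‖h ξ‖) ^ 2 := by rw [hzero (‖·‖) norm_zero]
    _ ≤ volume.real s * ∫ ξ in s, ‖h ξ‖ ^ 2 := by
        simpa using sq_integral_norm_le_measureReal_univ_mul_integral_sq_norm h2
    _ = volume.real s * ∫ ξ, ‖h ξ‖ ^ 2 := by rw [hzero (‖·‖ ^ 2) (by simp)]

theorem MeasureTheory.Integrable.setIntegral_sq_norm_le_of_support_fourier_subset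
    {G : V → ℂ} (hG : Integrable G) {s t : Set V} (hs : volume s ≠ ⊤) (ht : volume t ≠ ⊤)
    (hsupp : Function.support (𝓕 G) ⊆ s) :
    ∫ x in t, ‖G x‖ ^ 2 ≤ volume.real t * volume.real s * ∫ x, ‖G x‖ ^ 2 := by
  have : IsFiniteMeasure (volume.restrict s) := isFiniteMeasure_restrict.2 hs
  have hcont : Continuous (𝓕 G) :=
    VectorFourier.fourierIntegral_continuous Real.continuous_fourierChar continuous_inner hG
  have hbdd : ∀ᵐ ξ ∂volume.restrict s, ‖𝓕 G ξ‖ ≤ ∫ x, ‖G x‖ :=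
    .of_forall (VectorFourier.norm_fourierIntegral_le_integral_norm _ _ _ _)
  have hmem : MemLp (𝓕 G) 2 (volume.restrict s) :=
    MemLp.of_bound hcont.aestronglyMeasurable _ hbdd
  have hFG : Integrable (𝓕 G) :=
    IntegrableOn.integrable_of_forall_notMem_eq_zero (hmem.integrable one_le_two)
      fun ξ hξ ↦ Function.notMem_support.1 fun h' ↦ hξ (hsupp h')
  have hsup : ∀ᵐ x, ‖G x‖ ^ 2 ≤ volume.real s * ∫ x, ‖G x‖ ^ 2 := by
    filter_upwards [hG.fourierInv_fourier_ae_eq hFG] with x hx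
    rw [← hx, ← hG.integral_sq_norm_fourier hFG]
    exact sq_norm_fourierInv_le_of_support_subset hs hsupp hmem x
  calc ∫ x in t, ‖G x‖ ^ 2 ≤ ‖∫ x in t, ‖G x‖ ^ 2‖ := Real.le_norm_self _
    _ ≤ (volume.real s * ∫ x, ‖G x‖ ^ 2) * volume.real t := by
        refine norm_setIntegral_le_of_norm_le_const_ae' ht.lt_top ?_
        filter_upwards [hsup] with x hx _
        rwa [Real.norm_of_nonneg (by positivity)]
    _ = volume.real t * volume.real s * ∫ x, ‖G x‖ ^ 2 := by ring

end Fourier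

theorem MeasureTheory.Measure.addHaar_real_ball_of_pos {E : Type*} [NormedAddCommGroup E]
    [NormedSpace ℝ E] [MeasurableSpace E] [BorelSpace E] [FiniteDimensional ℝ E]
    (μ : Measure E) [μ.IsAddHaarMeasure] (x : E) {r : ℝ} (hr : 0 < r) :
    μ.real (ball x r) = r ^ Module.finrank ℝ E * μ.real (ball 0 1) := by
  rw [measureReal_def, measureReal_def, Measure.addHaar_ball_of_pos μ x hr, ENNReal.toReal_mul,
    ENNReal.toReal_ofReal (by positivity)]

theorem stmt_2_general (n : ℕ) :
    ∃ C > (0:ℝ), ∀ (G : EuclideanSpace ℝ (Fin n) → ℂ),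
      Integrable G → MemLp G 2 →
      ∀ (ξ₀ : EuclideanSpace ℝ (Fin n)) (r : ℝ), 0 < r →
      Function.support (𝓕 G) ⊆ Metric.ball ξ₀ r →
      ∀ (x₀ : EuclideanSpace ℝ (Fin n)) (ρ : ℝ), 0 < ρ → ρ ≤ r⁻¹ →
      ∫ x in Metric.ball x₀ ρ, ‖G x‖^2 ≤ C * (ρ * r)^n * ∫ x, ‖G x‖^2 := by
  set c := volume.real (ball (0 : EuclideanSpace ℝ (Fin n)) 1)
  have hc : 0 < c :=
    ENNReal.toReal_pos (measure_ball_pos _ _ one_pos).ne' measure_ball_lt_top.ne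
  refine ⟨c ^ 2, by positivity, fun G hG _ ξ₀ r hr hsupp x₀ ρ hρ _ ↦ ?_⟩
  calc ∫ x in ball x₀ ρ, ‖G x‖ ^ 2
      ≤ volume.real (ball x₀ ρ) * volume.real (ball ξ₀ r) * ∫ x, ‖G x‖ ^ 2 :=
        hG.setIntegral_sq_norm_le_of_support_fourier_subset measure_ball_lt_top.ne
          measure_ball_lt_top.ne hsupp
    _ = c ^ 2 * (ρ * r) ^ n * ∫ x, ‖G x‖ ^ 2 := by
        rw [Measure.addHaar_real_ball_of_pos _ _ hρ, Measure.addHaar_real_ball_of_pos _ _ hr,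
          finrank_euclideanSpace_fin]
        ring

/-- local L² concentration (uncertainty principle): a function with
Fourier support in a ball of radius `r` has at most a `(ρr)ⁿ` fraction of its
L² mass on any ball of radius `ρ ≤ r⁻¹`. -/
theorem stmt_2 (n : ℕ) (hn : 1 ≤ n) :
    ∃ C > (0:ℝ), ∀ (G : EuclideanSpace ℝ (Fin n) → ℂ),
      Integrable G → MemLp G 2 →
      ∀ (ξ₀ : EuclideanSpace ℝ (Fin n)) (r : ℝ), 0 < r →
      Function.support (𝓕 G) ⊆ Metric.ball ξ₀ r →
      ∀ (x₀ : EuclideanSpace ℝ (Fin n)) (ρ : ℝ), 0 < ρ → ρ ≤ r⁻¹ →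
      ∫ x in Metric.ball x₀ ρ, ‖G x‖^2 ≤ C * (ρ * r)^n * ∫ x, ‖G x‖^2 :=
  stmt_2_general n
end

section
/- Let h : ℝ^{n-1} → ℝ be a C² function satisfying ‖∂²_{ξξ}h(ξ) − I_{n-1}‖_op ≤ ε₀ for all ξ, where ε₀ > 0 is sufficiently small (depending only on n). Let V ⊂ ℝⁿ be a linear subspace given by V = {x : Σ_{j=1}^n a_{i,j} x_j = 0, i = 1,…,n−m}, and suppose ξ̃ ∈ ℝ^{n-1} satisfies Σ_{j=1}^{n-1} a_{i,j} ∂_{ξ_j}h(ξ̃) = a_{i,n} for all i, with the vectors αᵢ' = (a_{i,1},…,a_{i,n-1}) linearly independent. Let V̄ ⊂ ℝ^{n-1} be identified with V ∩ {x_n = 0} and let W̃ = span⟨∂²_{ξξ}h(ξ̃)α₁', …, ∂²_{ξξ}h(ξ̃)α_{n-m}'⟩. Then for every nonzero v ∈ V̄ and every nonzero w ∈ W̃, the angle between v and w is bounded below by a positive constant depending only on n and ε₀. -/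
/-!
Write `B` for the Hessian `∂²h(ξ̃)`, which is `ε`-close to the identity as a bilinear form, and
`w = B u` (via the Riesz map) for a vector `u` in the span of the `αᵢ'`. If `v ⊥ αᵢ'` for all `i`,
then `⟪u, v⟫ = 0`, so `|⟪w, v⟫| = |B u v - ⟪u, v⟫| ≤ ε ‖u‖ ‖v‖`, while `B u u ≥ (1 - ε) ‖u‖²`
gives `‖w‖ ≥ (1 - ε) ‖u‖`. Hence `cos ∠(v, w) ≤ ε / (1 - ε)`; with `ε = 1/4` the angle is at
least `arccos (1/3)`.
-/

open InnerProductSpace InnerProductGeometry Real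

namespace InnerProductGeometry

variable {E : Type*} [NormedAddCommGroup E] [InnerProductSpace ℝ E]

theorem arccos_le_angle_of_inner_le {x y : E} {k : ℝ} (hk : 0 ≤ k)
    (h : ⟪x, y⟫_ℝ ≤ k * (‖x‖ * ‖y‖)) : arccos k ≤ angle x y :=
  arccos_le_arccos (div_le_of_le_mul₀ (by positivity) hk h)

end InnerProductGeometry

namespace ContinuousLinearMap

variable {E : Type*} [NormedAddCommGroup E] [InnerProductSpace ℝ E] [CompleteSpace E]
  {B : E →L[ℝ] E →L[ℝ] ℝ} {ε : ℝ}

theorem abs_inner_toDual_symm_le_of_inner_eq_zero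
    (hB : ∀ u x, |B u x - ⟪u, x⟫_ℝ| ≤ ε * ‖u‖ * ‖x‖) {u v : E} (huv : ⟪u, v⟫_ℝ = 0) :
    |⟪(toDual ℝ E).symm (B u), v⟫_ℝ| ≤ ε * ‖u‖ * ‖v‖ := by
  simpa [toDual_symm_apply, huv] using hB u v

theorem mul_norm_le_norm_toDual_symm
    (hB : ∀ u x, |B u x - ⟪u, x⟫_ℝ| ≤ ε * ‖u‖ * ‖x‖) (u : E) :
    (1 - ε) * ‖u‖ ≤ ‖(toDual ℝ E).symm (B u)‖ := by
  rcases (norm_nonneg u).eq_or_lt with hu | hu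
  · rw [← hu, mul_zero]
    exact norm_nonneg _
  have hBuu : (1 - ε) * ‖u‖ * ‖u‖ ≤ B u u := by
    have := (abs_le.mp (hB u u)).1
    rw [real_inner_self_eq_norm_mul_norm] at this
    linarith
  refine le_of_mul_le_mul_right ?_ hu
  calc (1 - ε) * ‖u‖ * ‖u‖ ≤ B u u := hBuu
    _ = ⟪(toDual ℝ E).symm (B u), u⟫_ℝ := (toDual_symm_apply).symm
    _ ≤ ‖(toDual ℝ E).symm (B u)‖ * ‖u‖ := real_inner_le_norm _ _

theorem inner_toDual_symm_le_of_inner_eq_zero (hε₀ : 0 ≤ ε) (hε : ε < 1)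
    (hB : ∀ u x, |B u x - ⟪u, x⟫_ℝ| ≤ ε * ‖u‖ * ‖x‖) {u v : E} (huv : ⟪u, v⟫_ℝ = 0) :
    ⟪v, (toDual ℝ E).symm (B u)⟫_ℝ ≤ ε / (1 - ε) * (‖v‖ * ‖(toDual ℝ E).symm (B u)‖) := by
  set w := (toDual ℝ E).symm (B u)
  have hε' : 0 < 1 - ε := sub_pos.mpr hε
  have hεu : ε * ‖u‖ ≤ ε / (1 - ε) * ‖w‖ :=
    calc ε * ‖u‖ = ε / (1 - ε) * ((1 - ε) * ‖u‖) := by field_simp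
      _ ≤ ε / (1 - ε) * ‖w‖ := by gcongr; exact mul_norm_le_norm_toDual_symm hB u
  calc ⟪v, w⟫_ℝ ≤ |⟪w, v⟫_ℝ| := real_inner_comm w v ▸ le_abs_self _
    _ ≤ ε * ‖u‖ * ‖v‖ := abs_inner_toDual_symm_le_of_inner_eq_zero hB huv
    _ ≤ ε / (1 - ε) * ‖w‖ * ‖v‖ := by gcongr
    _ = ε / (1 - ε) * (‖v‖ * ‖w‖) := by ring

theorem arccos_le_angle_of_mem_span_toDual_symm {ι : Type*} [Fintype ι] (hε₀ : 0 ≤ ε)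
    (hε : ε < 1) (hB : ∀ u x, |B u x - ⟪u, x⟫_ℝ| ≤ ε * ‖u‖ * ‖x‖) {a : ι → E} {v w : E}
    (hv : ∀ i, ⟪a i, v⟫_ℝ = 0)
    (hw : w ∈ Submodule.span ℝ (Set.range fun i => (toDual ℝ E).symm (B (a i)))) :
    arccos (ε / (1 - ε)) ≤ angle v w := by
  obtain ⟨c, rfl⟩ := (Submodule.mem_span_range_iff_exists_fun ℝ).mp hw
  have hsum : ∑ i, c i • (toDual ℝ E).symm (B (a i)) =
      (toDual ℝ E).symm (B (∑ i, c i • a i)) := by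
    simp [map_sum, map_smul]
  have huv : ⟪∑ i, c i • a i, v⟫_ℝ = 0 := by
    simp [sum_inner, real_inner_smul_left, hv]
  rw [hsum]
  exact arccos_le_angle_of_inner_le (div_nonneg hε₀ (sub_pos.mpr hε).le)
    (inner_toDual_symm_le_of_inner_eq_zero hε₀ hε hB huv)

end ContinuousLinearMap

theorem stmt_3_general (n m : ℕ) :
    ∃ ε₀ > (0:ℝ), ∃ c > (0:ℝ),
      ∀ (h : EuclideanSpace ℝ (Fin (n-1)) → ℝ), ContDiff ℝ 2 h →
      (∀ (ξ u w : EuclideanSpace ℝ (Fin (n-1))),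
        |fderiv ℝ (fderiv ℝ h) ξ u w - (inner ℝ u w : ℝ)| ≤ ε₀ * ‖u‖ * ‖w‖) →
      ∀ (a : Fin (n - m) → EuclideanSpace ℝ (Fin (n-1))) (b : Fin (n - m) → ℝ)
        (ξt : EuclideanSpace ℝ (Fin (n-1))),
        LinearIndependent ℝ a →
        (∀ i, fderiv ℝ h ξt (a i) = b i) →
        ∀ v : EuclideanSpace ℝ (Fin (n-1)),
          (∀ i, (inner ℝ (a i) v : ℝ) = 0) → v ≠ 0 →
        ∀ w, w ∈ Submodule.span ℝ
            (Set.range fun i =>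
              (InnerProductSpace.toDual ℝ (EuclideanSpace ℝ (Fin (n-1)))).symm
                (fderiv ℝ (fderiv ℝ h) ξt (a i))) →
          w ≠ 0 → c ≤ InnerProductGeometry.angle v w := by
  refine ⟨1 / 4, by norm_num, arccos (1 / 3), arccos_pos.mpr (by norm_num), ?_⟩
  intro h _ hHess a _ ξt _ _ v hv _ w hw _
  have hε : (1 / 4 : ℝ) / (1 - 1 / 4) = 1 / 3 := by norm_num
  rw [← hε]
  exact ContinuousLinearMap.arccos_le_angle_of_mem_span_toDual_symm
    (by norm_num) (by norm_num) (hHess ξt) hv hw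

/-- quantitative transversality of `V̄` and
`W̃ = span⟨∂²h(ξ̃)αᵢ'⟩` when the Hessian of `h` is `ε₀`-close to the identity. -/
theorem stmt_3 (n m : ℕ) (hn : 2 ≤ n) (hm : 1 ≤ m) (hmn : m ≤ n - 1) :
    ∃ ε₀ > (0:ℝ), ∃ c > (0:ℝ),
      ∀ (h : EuclideanSpace ℝ (Fin (n-1)) → ℝ), ContDiff ℝ 2 h →
      (∀ (ξ u w : EuclideanSpace ℝ (Fin (n-1))),
        |fderiv ℝ (fderiv ℝ h) ξ u w - (inner ℝ u w : ℝ)| ≤ ε₀ * ‖u‖ * ‖w‖) →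
      ∀ (a : Fin (n - m) → EuclideanSpace ℝ (Fin (n-1))) (b : Fin (n - m) → ℝ)
        (ξt : EuclideanSpace ℝ (Fin (n-1))),
        LinearIndependent ℝ a →
        (∀ i, fderiv ℝ h ξt (a i) = b i) →
        ∀ v : EuclideanSpace ℝ (Fin (n-1)),
          (∀ i, (inner ℝ (a i) v : ℝ) = 0) → v ≠ 0 →
        ∀ w, w ∈ Submodule.span ℝ
            (Set.range fun i =>
              (InnerProductSpace.toDual ℝ (EuclideanSpace ℝ (Fin (n-1)))).symm
                (fderiv ℝ (fderiv ℝ h) ξt (a i))) →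
          w ≠ 0 → c ≤ InnerProductGeometry.angle v w :=
  stmt_3_general n m
end
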